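/- arXiv:2402.01085 — 6 statements merged into one kernel-verified Lean document; each statement's English description precedes it below -/
import Mathlib

section
/- For any m real skew-symmetric 3×3 matrices B₁,…,B_m, one has ∑_{r,s=1}^m ‖[B_r,B_s]‖² ≤ (1/3)(∑_{r=1}^m ‖B_r‖²)². -/
/-!
Every skew-symmetric `3 × 3` matrix is the matrix `B_v` of `w ↦ v ⨯₃ w` for a vector `v ∈ ℝ³`,
with `‖B_v‖² = 2 |v|²` and `[B_u, B_v] = B_{u ⨯₃ v}`. Writing `B r = B_{b r}`, Lagrange's identity
turns the left-hand side into `2 ((∑ |b r|²)² - ∑ ⟨b r, b s⟩²)`. The double sum is the squared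
Frobenius norm of the `3 × 3` matrix `G = ∑ b r (b r)ᵀ`, which is at least `∑ G i i ² ≥ (tr G)² / 3`
by Cauchy–Schwarz, and `tr G = ∑ |b r|²`.
-/

open Matrix

namespace Matrix

variable {R : Type*}

/-- The matrix of `w ↦ v ⨯₃ w`. -/
def crossMatrix [Neg R] [Zero R] (v : Fin 3 → R) : Matrix (Fin 3) (Fin 3) R :=
  !![0, -v 2, v 1; v 2, 0, -v 0; -v 1, v 0, 0]

theorem exists_crossMatrix_eq_of_transpose_eq_neg [Ring R] [NoZeroDivisors R] [CharZero R]
    {A : Matrix (Fin 3) (Fin 3) R} (hA : Aᵀ = -A) : ∃ v, crossMatrix v = A := by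
  have hswap : ∀ i j, A j i = -A i j := fun i j => congrFun (congrFun hA i) j
  have hdiag : ∀ i, A i i = 0 := fun i => CharZero.eq_neg_self_iff.mp (hswap i i)
  refine ⟨![A 2 1, A 0 2, A 1 0], ?_⟩
  ext i j
  fin_cases i <;> fin_cases j <;> simp [crossMatrix, hdiag, hswap 1 0, hswap 0 2, hswap 2 1]

variable [CommRing R]

theorem crossMatrix_mul_sub_mul_crossMatrix (u v : Fin 3 → R) :
    crossMatrix u * crossMatrix v - crossMatrix v * crossMatrix u = crossMatrix (u ⨯₃ v) := by
  ext i j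
  fin_cases i <;> fin_cases j <;> simp [crossMatrix, cross_apply] <;> ring

theorem trace_crossMatrix_mul_transpose (v : Fin 3 → R) :
    trace (crossMatrix v * (crossMatrix v)ᵀ) = 2 * (v ⬝ᵥ v) := by
  simp [crossMatrix, trace, vecMul, dotProduct, Fin.sum_univ_three]
  ring

theorem trace_commutator_crossMatrix_mul_transpose (u v : Fin 3 → R) :
    trace ((crossMatrix u * crossMatrix v - crossMatrix v * crossMatrix u) *
        (crossMatrix u * crossMatrix v - crossMatrix v * crossMatrix u)ᵀ) =
      2 * (u ⬝ᵥ u * v ⬝ᵥ v - (u ⬝ᵥ v) ^ 2) := by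
  rw [crossMatrix_mul_sub_mul_crossMatrix, trace_crossMatrix_mul_transpose, cross_dot_cross,
    dotProduct_comm v u, sq]

end Matrix

section Gram

variable {ι n R : Type*} [Fintype ι] [Fintype n] [CommRing R]

/-- The Gram matrices `X Xᵀ` and `Xᵀ X` of the matrix `X` with rows `b r` have the same
Frobenius norm. -/
theorem sum_sum_dotProduct_sq (b : ι → n → R) :
    ∑ r, ∑ s, (b r ⬝ᵥ b s) ^ 2 = ∑ i, ∑ j, (∑ r, b r i * b r j) ^ 2 := by
  simp_rw [dotProduct, sq, Finset.sum_mul_sum, mul_mul_mul_comm,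
    Finset.sum_comm (γ := ι) (α := n)]

theorem sq_sum_dotProduct_self_le_card_mul [LinearOrder R] [IsStrictOrderedRing R]
    (b : ι → n → R) :
    (∑ r, b r ⬝ᵥ b r) ^ 2 ≤ Fintype.card n * ∑ r, ∑ s, (b r ⬝ᵥ b s) ^ 2 := by
  set G : n → n → R := fun i j => ∑ r, b r i * b r j
  calc (∑ r, b r ⬝ᵥ b r) ^ 2 = (∑ i, G i i) ^ 2 := by rw [Finset.sum_comm]; rfl
    _ ≤ Fintype.card n * ∑ i, G i i ^ 2 := sq_sum_le_card_mul_sum_sq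
    _ ≤ Fintype.card n * ∑ i, ∑ j, G i j ^ 2 := by
      gcongr with i
      exact Finset.single_le_sum (f := fun j => G i j ^ 2) (fun j _ => sq_nonneg _)
        (Finset.mem_univ i)
    _ = Fintype.card n * ∑ r, ∑ s, (b r ⬝ᵥ b s) ^ 2 := by rw [sum_sum_dotProduct_sq]

end Gram

/-- DDVV-type inequality for real skew-symmetric 3×3 matrices. -/
theorem ddvv_skew_three (m : ℕ) (B : Fin m → Matrix (Fin 3) (Fin 3) ℝ)
    (hskew : ∀ r, (B r)ᵀ = -(B r)) :
    ∑ r, ∑ s, trace ((B r * B s - B s * B r) * (B r * B s - B s * B r)ᵀ) ≤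
      (1 / 3) * (∑ r, trace (B r * (B r)ᵀ)) ^ 2 := by
  choose b hb using fun r => exists_crossMatrix_eq_of_transpose_eq_neg (hskew r)
  simp only [← hb, trace_commutator_crossMatrix_mul_transpose, trace_crossMatrix_mul_transpose]
  have hgram := sq_sum_dotProduct_self_le_card_mul b
  rw [Fintype.card_fin, Nat.cast_ofNat] at hgram
  simp only [← Finset.mul_sum, Finset.sum_sub_distrib, ← Finset.sum_mul, ← sq]
  linear_combination (2 / 3 : ℝ) * hgram
end

section
/- For any two Hermitian n×n complex matrices B₁, B₂ (n ≥ 2), one has ∑_{r,s=1}^2 ‖[B_r,B_s]‖² ≤ (‖B₁‖² + ‖B₂‖²)². -/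
/-!
Both diagonal terms of the sum vanish and the two off-diagonal ones are equal, so it suffices
to show `‖[A, M]‖² ≤ 2 ‖A‖² ‖M‖²` for Hermitian `A` and then use `4ab ≤ (a + b)²`.
Conjugating by the eigenvector unitary of `A`, which preserves the Frobenius norm, makes `A`
diagonal; then `[A, M]` has entries `(λᵢ - λⱼ) Mᵢⱼ`, and for `i ≠ j` one has
`(λᵢ - λⱼ)² ≤ 2 (λᵢ² + λⱼ²) ≤ 2 ‖A‖²`.
-/

open Matrix

open scoped Matrix.Norms.Frobenius

namespace Matrix

theorem frobenius_norm_sq_eq_sum {m n α : Type*} [Fintype m] [Fintype n]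
    [SeminormedAddCommGroup α] (A : Matrix m n α) :
    ‖A‖ ^ 2 = ∑ i, ∑ j, ‖A i j‖ ^ 2 := by
  change ‖WithLp.toLp 2 fun i ↦ WithLp.toLp 2 fun j ↦ A i j‖ ^ 2 = _
  simp only [PiLp.norm_sq_eq_of_L2]

section RCLike

variable {𝕜 : Type*} [RCLike 𝕜] {n : Type*} [Fintype n]

theorem frobenius_norm_sq_eq_re_trace {m : Type*} [Fintype m] (A : Matrix m n 𝕜) :
    ‖A‖ ^ 2 = RCLike.re (trace (A * Aᴴ)) := by
  simp only [frobenius_norm_sq_eq_sum, trace, diag_apply, mul_apply, conjTranspose_apply,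
    RCLike.star_def, RCLike.mul_conj, map_sum]
  norm_cast

theorem frobenius_norm_conjStarAlgAut [DecidableEq n] (U : unitary (Matrix n n 𝕜))
    (A : Matrix n n 𝕜) : ‖Unitary.conjStarAlgAut 𝕜 _ U A‖ = ‖A‖ := by
  rw [← sq_eq_sq₀ (norm_nonneg _) (norm_nonneg _), frobenius_norm_sq_eq_re_trace,
    frobenius_norm_sq_eq_re_trace, ← star_eq_conjTranspose, ← map_star, ← map_mul,
    Unitary.conjStarAlgAut_apply, trace_mul_cycle, Unitary.coe_star_mul_self, one_mul,
    star_eq_conjTranspose]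

end RCLike

section NormedField

variable {K : Type*} [NormedField K] {n : Type*} [Fintype n] [DecidableEq n]

theorem diagonal_mul_sub_mul_diagonal_apply (d : n → K) (M : Matrix n n K) (i j : n) :
    (diagonal d * M - M * diagonal d) i j = (d i - d j) * M i j := by
  rw [sub_apply, diagonal_mul, mul_diagonal, sub_mul, mul_comm (M i j)]

theorem norm_sub_sq_le_two_mul_frobenius_norm_diagonal_sq (d : n → K) (i j : n) :
    ‖d i - d j‖ ^ 2 ≤ 2 * ‖diagonal d‖ ^ 2 := by
  rcases eq_or_ne i j with rfl | hij
  · simp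
  have hpair : ‖d i‖ ^ 2 + ‖d j‖ ^ 2 ≤ ‖diagonal d‖ ^ 2 := by
    rw [frobenius_norm_diagonal, PiLp.norm_sq_eq_of_L2,
      ← Finset.sum_pair (f := fun k ↦ ‖d k‖ ^ 2) hij]
    exact Finset.sum_le_univ_sum_of_nonneg fun k ↦ sq_nonneg ‖d k‖
  calc ‖d i - d j‖ ^ 2 ≤ (‖d i‖ + ‖d j‖) ^ 2 := by gcongr; exact norm_sub_le _ _
    _ ≤ 2 * (‖d i‖ ^ 2 + ‖d j‖ ^ 2) := add_sq_le
    _ ≤ 2 * ‖diagonal d‖ ^ 2 := by gcongr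

theorem frobenius_norm_sq_diagonal_commutator_le (d : n → K) (M : Matrix n n K) :
    ‖diagonal d * M - M * diagonal d‖ ^ 2 ≤ 2 * ‖diagonal d‖ ^ 2 * ‖M‖ ^ 2 := by
  calc ‖diagonal d * M - M * diagonal d‖ ^ 2
      = ∑ i, ∑ j, ‖d i - d j‖ ^ 2 * ‖M i j‖ ^ 2 := by
        simp only [frobenius_norm_sq_eq_sum, diagonal_mul_sub_mul_diagonal_apply, norm_mul,
          mul_pow]
    _ ≤ ∑ i, ∑ j, 2 * ‖diagonal d‖ ^ 2 * ‖M i j‖ ^ 2 := by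
        gcongr with i _ j _
        exact norm_sub_sq_le_two_mul_frobenius_norm_diagonal_sq d i j
    _ = 2 * ‖diagonal d‖ ^ 2 * ‖M‖ ^ 2 := by
        simp only [frobenius_norm_sq_eq_sum, Finset.mul_sum]

end NormedField

theorem IsHermitian.frobenius_norm_sq_commutator_le {𝕜 : Type*} [RCLike 𝕜] {n : Type*}
    [Fintype n] [DecidableEq n] {A : Matrix n n 𝕜} (hA : A.IsHermitian) (M : Matrix n n 𝕜) :
    ‖A * M - M * A‖ ^ 2 ≤ 2 * ‖A‖ ^ 2 * ‖M‖ ^ 2 := by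
  set φ := Unitary.conjStarAlgAut 𝕜 (Matrix n n 𝕜) (star hA.eigenvectorUnitary)
  set D : Matrix n n 𝕜 := diagonal (RCLike.ofReal ∘ hA.eigenvalues)
  have hD : φ A = D := hA.conjStarAlgAut_star_eigenvectorUnitary
  calc ‖A * M - M * A‖ ^ 2 = ‖φ (A * M - M * A)‖ ^ 2 := by
        rw [frobenius_norm_conjStarAlgAut]
    _ = ‖D * φ M - φ M * D‖ ^ 2 := by rw [map_sub, map_mul, map_mul, hD]
    _ ≤ 2 * ‖D‖ ^ 2 * ‖φ M‖ ^ 2 := frobenius_norm_sq_diagonal_commutator_le _ _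
    _ = 2 * ‖A‖ ^ 2 * ‖M‖ ^ 2 := by
        rw [← hD, frobenius_norm_conjStarAlgAut, frobenius_norm_conjStarAlgAut]

end Matrix

theorem ddvv_hermitian_two_general (n : ℕ)
    (B : Fin 2 → Matrix (Fin n) (Fin n) ℂ) (hherm : ∀ r, (B r)ᴴ = B r) :
    ∑ r, ∑ s, (trace ((B r * B s - B s * B r) * (B r * B s - B s * B r)ᴴ)).re ≤
      ((trace (B 0 * (B 0)ᴴ)).re + (trace (B 1 * (B 1)ᴴ)).re) ^ 2 := by
  have hnorm (X : Matrix (Fin n) (Fin n) ℂ) : (trace (X * Xᴴ)).re = ‖X‖ ^ 2 :=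
    (frobenius_norm_sq_eq_re_trace X).symm
  have hcomm := IsHermitian.frobenius_norm_sq_commutator_le (hherm 0) (B 1)
  simp only [Fin.sum_univ_two, hnorm, sub_self, norm_zero]
  rw [norm_sub_rev (B 1 * B 0)]
  nlinarith [sq_nonneg (‖B 0‖ ^ 2 - ‖B 1‖ ^ 2)]

/-- DDVV-type inequality for two Hermitian matrices. -/
theorem ddvv_hermitian_two (n : ℕ) (hn : 2 ≤ n)
    (B : Fin 2 → Matrix (Fin n) (Fin n) ℂ) (hherm : ∀ r, (B r)ᴴ = B r) :
    ∑ r, ∑ s, (trace ((B r * B s - B s * B r) * (B r * B s - B s * B r)ᴴ)).re ≤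
      ((trace (B 0 * (B 0)ᴴ)).re + (trace (B 1 * (B 1)ᴴ)).re) ^ 2 :=
  ddvv_hermitian_two_general n B hherm
end

section
/- Let P₀,…,P_m be real symmetric orthogonal 2l×2l matrices forming a Clifford system, i.e., P_iP_j + P_jP_i = 2δ_{ij}I_{2l}. If B₁,…,B_M are real linear combinations of P₀,…,P_m, then ∑_{r,s=1}^M ‖[B_r,B_s]‖² ≤ (2/l)(1 - 1/N)(∑_{r=1}^M ‖B_r‖²)², where N = min(m+1, M). -/
/-!
Write `B r = ∑ i, c r i • P i` and let `g` be the Gram matrix of the coefficient vectors `c r`.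
The Clifford relations give `B r * B s + B s * B r = 2 g r s • 1`, so `B r ^ 2 = g r r • 1` and
`[B r, B s] [B r, B s]ᵀ = 4 (g r r g s s - g r s ^ 2) • 1`. Summing, the left side is
`8 l ((tr g)² - ‖g‖²)` and `∑ ‖B r‖² = 2 l tr g`, so the inequality becomes `(tr g)² ≤ N ‖g‖²`.
This is Cauchy–Schwarz on the diagonal of `g` (giving the factor `M`) or on the diagonal of the
`(m + 1) × (m + 1)` Gram matrix of the rows of `c`, which has the same trace and Frobenius norm
(giving the factor `m + 1`).
-/

open Matrix

section Anticommuting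

variable {R A : Type*}

theorem commutator_mul_neg_commutator_of_anticomm [CommRing R] [Ring A] [Algebra R A]
    {X Y : A} {α β γ : R}
    (hXX : X * X = α • 1) (hYY : Y * Y = β • 1) (hXY : X * Y + Y * X = (2 * γ) • 1) :
    (X * Y - Y * X) * (Y * X - X * Y) = (4 * (α * β - γ ^ 2)) • 1 := by
  have expand : (X * Y - Y * X) * (Y * X - X * Y) =
      X * (Y * Y) * X + Y * (X * X) * Y + (X * (Y * Y) * X + Y * (X * X) * Y)
        - (X * Y + Y * X) * (X * Y + Y * X) := by
    noncomm_ring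
  rw [expand, hXX, hYY, hXY]
  simp only [smul_mul_assoc, mul_smul_comm, mul_one, hXX, hYY, smul_smul]
  module

theorem mul_self_eq_smul_one_of_add_self [Field R] [CharZero R] [Ring A] [Algebra R A]
    {X : A} {α : R} (h : X * X + X * X = (2 * α) • 1) : X * X = α • 1 :=
  smul_right_injective A (two_ne_zero (α := R)) (by dsimp only; rw [two_smul, h, smul_smul])

theorem sum_smul_mul_sum_smul_add_of_clifford [CommRing R] [Ring A] [Algebra R A]
    {ι : Type*} [Fintype ι] [DecidableEq ι] {P : ι → A}
    (hP : ∀ i j, P i * P j + P j * P i = ((if i = j then 2 else 0 : R)) • (1 : A))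
    (c d : ι → R) :
    (∑ i, c i • P i) * (∑ j, d j • P j) + (∑ j, d j • P j) * (∑ i, c i • P i) =
      (2 * ∑ i, c i * d i) • (1 : A) := by
  simp only [Finset.sum_mul_sum, smul_mul_smul_comm]
  rw [Finset.sum_comm (f := fun j i => (d j * c i) • (P j * P i))]
  simp only [← Finset.sum_add_distrib, mul_comm (d _), ← smul_add, hP, smul_smul,
    ← Finset.sum_smul, mul_ite, mul_zero, Finset.sum_ite_eq, Finset.mem_univ, if_true,
    Finset.mul_sum, mul_comm _ (2 : R)]

end Anticommuting

section Gram

variable {m n R : Type*} [Fintype m] [Fintype n]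

theorem trace_mul_transpose_self_eq_sum_sq [Semiring R] (A : Matrix m n R) :
    trace (A * Aᵀ) = ∑ i, ∑ j, A i j ^ 2 := by
  simp only [trace, diag_apply, mul_apply, transpose_apply, sq]

variable [CommRing R] [LinearOrder R] [IsStrictOrderedRing R]

theorem sq_trace_le_card_mul_trace_mul_transpose_self (G : Matrix n n R) :
    trace G ^ 2 ≤ Fintype.card n * trace (G * Gᵀ) := by
  calc trace G ^ 2 ≤ Fintype.card n * ∑ i, G i i ^ 2 := sq_sum_le_card_mul_sum_sq
    _ ≤ Fintype.card n * ∑ i, ∑ j, G i j ^ 2 := by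
        gcongr with i
        exact Finset.single_le_sum (fun j _ => sq_nonneg (G i j)) (Finset.mem_univ i)
    _ = Fintype.card n * trace (G * Gᵀ) := by rw [trace_mul_transpose_self_eq_sum_sq]

/-- The bound by `card m` comes from the Gram matrix `C * Cᵀ`, which has the same trace and
Frobenius norm as `Cᵀ * C`. -/
theorem sq_trace_transpose_mul_self_le (C : Matrix m n R) :
    trace (Cᵀ * C) ^ 2 ≤
      min (Fintype.card m : R) (Fintype.card n) * trace ((Cᵀ * C) * (Cᵀ * C)ᵀ) := by
  have htrace : trace (C * Cᵀ) = trace (Cᵀ * C) := trace_mul_comm C Cᵀ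
  have hfrob : trace ((C * Cᵀ) * (C * Cᵀ)ᵀ) = trace ((Cᵀ * C) * (Cᵀ * C)ᵀ) := by
    simp only [transpose_mul, transpose_transpose, ← Matrix.mul_assoc]
    rw [trace_mul_comm, ← Matrix.mul_assoc, ← Matrix.mul_assoc]
  have hrows := sq_trace_le_card_mul_trace_mul_transpose_self (C * Cᵀ)
  rw [htrace, hfrob] at hrows
  rw [min_mul_of_nonneg _ _ (by rw [trace_mul_transpose_self_eq_sum_sq]; positivity)]
  exact le_min hrows (sq_trace_le_card_mul_trace_mul_transpose_self (Cᵀ * C))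

end Gram

section AnticommutingMatrices

variable {n κ R : Type*} [Fintype n] [DecidableEq n] [Field R] [CharZero R]
  {B : κ → Matrix n n R} {G : Matrix κ κ R}

theorem trace_mul_transpose_of_anticomm (hsymm : ∀ r, (B r)ᵀ = B r)
    (hanti : ∀ r s, B r * B s + B s * B r = (2 * G r s) • 1) (r : κ) :
    trace (B r * (B r)ᵀ) = Fintype.card n * G r r := by
  rw [hsymm, mul_self_eq_smul_one_of_add_self (hanti r r), trace_smul, trace_one, smul_eq_mul,
    mul_comm]

theorem trace_commutator_mul_transpose_of_anticomm (hsymm : ∀ r, (B r)ᵀ = B r)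
    (hanti : ∀ r s, B r * B s + B s * B r = (2 * G r s) • 1) (r s : κ) :
    trace ((B r * B s - B s * B r) * (B r * B s - B s * B r)ᵀ) =
      4 * Fintype.card n * (G r r * G s s - G r s ^ 2) := by
  rw [transpose_sub, transpose_mul, transpose_mul, hsymm, hsymm,
    commutator_mul_neg_commutator_of_anticomm (mul_self_eq_smul_one_of_add_self (hanti r r))
      (mul_self_eq_smul_one_of_add_self (hanti s s)) (hanti r s),
    trace_smul, trace_one, smul_eq_mul]
  ring

theorem sum_trace_mul_transpose_of_anticomm [Fintype κ] (hsymm : ∀ r, (B r)ᵀ = B r)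
    (hanti : ∀ r s, B r * B s + B s * B r = (2 * G r s) • 1) :
    ∑ r, trace (B r * (B r)ᵀ) = Fintype.card n * trace G := by
  simp only [trace_mul_transpose_of_anticomm hsymm hanti, ← Finset.mul_sum]
  rfl

theorem sum_trace_commutator_mul_transpose_of_anticomm [Fintype κ] (hsymm : ∀ r, (B r)ᵀ = B r)
    (hanti : ∀ r s, B r * B s + B s * B r = (2 * G r s) • 1) :
    ∑ r, ∑ s, trace ((B r * B s - B s * B r) * (B r * B s - B s * B r)ᵀ) =
      4 * Fintype.card n * (trace G ^ 2 - trace (G * Gᵀ)) := by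
  simp only [trace_commutator_mul_transpose_of_anticomm hsymm hanti, ← Finset.mul_sum,
    Finset.sum_sub_distrib]
  rw [trace_mul_transpose_self_eq_sum_sq, sq, trace, Finset.sum_mul]
  rfl

end AnticommutingMatrices

theorem ddvv_clifford_system_general (l m M : ℕ)
    (P : Fin (m + 1) → Matrix (Fin (2 * l)) (Fin (2 * l)) ℝ)
    (hsym : ∀ i, (P i)ᵀ = P i)
    (hcliff : ∀ i j, P i * P j + P j * P i =
      ((if i = j then 2 else 0 : ℝ)) • (1 : Matrix (Fin (2 * l)) (Fin (2 * l)) ℝ))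
    (B : Fin M → Matrix (Fin (2 * l)) (Fin (2 * l)) ℝ)
    (hB : ∀ r, B r ∈ Submodule.span ℝ (Set.range P)) :
    ∑ r, ∑ s, trace ((B r * B s - B s * B r) * (B r * B s - B s * B r)ᵀ) ≤
      (2 / (l : ℝ)) * (1 - 1 / ((min (m + 1) M : ℕ) : ℝ)) *
        (∑ r, trace (B r * (B r)ᵀ)) ^ 2 := by
  choose c hc using fun r => (Submodule.mem_span_range_iff_exists_fun ℝ).mp (hB r)
  set C : Matrix (Fin (m + 1)) (Fin M) ℝ := (of c)ᵀ
  have hsymmB : ∀ r, (B r)ᵀ = B r := fun r => by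
    simp only [← hc r, transpose_sum, transpose_smul, hsym]
  have hanti : ∀ r s, B r * B s + B s * B r = (2 * (Cᵀ * C) r s) • 1 := fun r s => by
    rw [← hc r, ← hc s, sum_smul_mul_sum_smul_add_of_clifford hcliff]
    simp [C, mul_apply]
  rw [sum_trace_commutator_mul_transpose_of_anticomm hsymmB hanti,
    sum_trace_mul_transpose_of_anticomm hsymmB hanti]
  have hgram := sq_trace_transpose_mul_self_le C
  have hQ : 0 ≤ trace ((Cᵀ * C) * (Cᵀ * C)ᵀ) := by
    rw [trace_mul_transpose_self_eq_sum_sq]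
    positivity
  rw [Fintype.card_fin, Fintype.card_fin, ← Nat.cast_min] at hgram
  set S := trace (Cᵀ * C)
  set Q := trace ((Cᵀ * C) * (Cᵀ * C)ᵀ)
  set N : ℝ := ((min (m + 1) M : ℕ) : ℝ)
  simp only [Fintype.card_fin, Nat.cast_mul, Nat.cast_ofNat]
  calc 4 * (2 * (l : ℝ)) * (S ^ 2 - Q) = 8 * l * (S ^ 2 - Q) := by ring
    _ ≤ 8 * l * (S ^ 2 - S ^ 2 / N) := by
        gcongr
        exact div_le_of_le_mul₀ (by positivity) hQ (by rwa [mul_comm])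
    _ = 2 / l * (1 - 1 / N) * (2 * l * S) ^ 2 := by
        rcases eq_or_ne (l : ℝ) 0 with hl | hl
        · simp [hl]
        · field_simp
          ring

/-- DDVV-type inequality for matrices in the span of a Clifford system. -/
theorem ddvv_clifford_system (l m M : ℕ) (hl : 0 < l)
    (P : Fin (m + 1) → Matrix (Fin (2 * l)) (Fin (2 * l)) ℝ)
    (hsym : ∀ i, (P i)ᵀ = P i)
    (horth : ∀ i, P i * (P i)ᵀ = 1)
    (hcliff : ∀ i j, P i * P j + P j * P i =
      ((if i = j then 2 else 0 : ℝ)) • (1 : Matrix (Fin (2 * l)) (Fin (2 * l)) ℝ))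
    (B : Fin M → Matrix (Fin (2 * l)) (Fin (2 * l)) ℝ)
    (hB : ∀ r, B r ∈ Submodule.span ℝ (Set.range P)) :
    ∑ r, ∑ s, trace ((B r * B s - B s * B r) * (B r * B s - B s * B r)ᵀ) ≤
      (2 / (l : ℝ)) * (1 - 1 / ((min (m + 1) M : ℕ) : ℝ)) *
        (∑ r, trace (B r * (B r)ᵀ)) ^ 2 :=
  ddvv_clifford_system_general l m M P hsym hcliff B hB
end

section
/- Let E₁,…,E_{m-1} be real skew-symmetric orthogonal l×l matrices satisfying E_iE_j + E_jE_i = -2δ_{ij}I_l. If B₁,…,B_M are real linear combinations of E₁,…,E_{m-1}, then ∑_{r,s=1}^M ‖[B_r,B_s]‖² ≤ (4/l)(1 - 1/N)(∑_{r=1}^M ‖B_r‖²)², where N = min(m-1, M). -/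
/-!
Write `B r = ∑ i, x r i • E i`. The Clifford relations give the anticommutators
`B r * B s + B s * B r = -2 ⟪x r, x s⟫ • 1`, from which `[B r, B s]²` is the scalar matrix
`4 (⟪x r, x s⟫² - ‖x r‖² ‖x s‖²) • 1`. Both sides of the inequality are therefore `l` times
expressions in the Gram matrix `G = X Xᵀ` of the coefficient vectors, and the claim reduces to
`(tr G)² ≤ N ‖G‖²`: Cauchy–Schwarz on the diagonal of `X Xᵀ` or of `Xᵀ X`, whichever is `N × N`.
-/

open Matrix

section Anticommuting

variable {R : Type*} [Ring R] [Algebra ℝ R]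

theorem commutator_mul_self_of_anticomm {a b : R} {α β γ : ℝ}
    (haa : a * a = (-α) • 1) (hbb : b * b = (-β) • 1) (hab : a * b + b * a = (-2 * γ) • 1) :
    (a * b - b * a) * (a * b - b * a) = (4 * (γ ^ 2 - α * β)) • 1 := by
  have hba : b * a = (-2 * γ) • 1 - a * b := eq_sub_of_add_eq' hab
  have hsq : a * b * (a * b) = (-2 * γ) • (a * b) - (α * β) • 1 := by
    calc a * b * (a * b) = a * (b * a) * b := by noncomm_ring
      _ = (-2 * γ) • (a * b) - (a * a) * (b * b) := by
        rw [hba, mul_sub, sub_mul, mul_smul_comm, smul_mul_assoc]; noncomm_ring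
      _ = _ := by rw [haa, hbb, smul_mul_smul_comm, one_mul, neg_mul_neg]
  rw [hba]
  simp only [mul_sub, sub_mul, smul_mul_assoc, mul_smul_comm, one_mul, mul_one, hsq]
  module

end Anticommuting

namespace Matrix

variable {m n : Type*} [Fintype m] [Fintype n]

theorem trace_mul_transpose_eq_sum_sq (A : Matrix n m ℝ) :
    trace (A * Aᵀ) = ∑ i, ∑ j, A i j ^ 2 := by
  simp [trace, mul_apply, sq]

theorem sq_trace_le_card_mul_trace_mul_transpose (A : Matrix n n ℝ) :
    trace A ^ 2 ≤ Fintype.card n * trace (A * Aᵀ) := by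
  rw [trace_mul_transpose_eq_sum_sq]
  calc trace A ^ 2 ≤ Fintype.card n * ∑ i, A i i ^ 2 := sq_sum_le_card_mul_sum_sq
    _ ≤ Fintype.card n * ∑ i, ∑ j, A i j ^ 2 := by
      gcongr with i
      exact Finset.single_le_sum (f := fun j => A i j ^ 2) (fun j _ => sq_nonneg _)
        (Finset.mem_univ i)

theorem sq_trace_mul_transpose_le_min_card (X : Matrix m n ℝ) :
    trace (X * Xᵀ) ^ 2 ≤
      (min (Fintype.card m) (Fintype.card n) : ℕ) * trace (X * Xᵀ * (X * Xᵀ)ᵀ) := by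
  have h_trace : trace (Xᵀ * X) = trace (X * Xᵀ) := trace_mul_comm _ _
  have h_frob : trace (Xᵀ * X * (Xᵀ * X)ᵀ) = trace (X * Xᵀ * (X * Xᵀ)ᵀ) := by
    simp only [transpose_mul, transpose_transpose, Matrix.mul_assoc]
    rw [trace_mul_comm]
    simp only [Matrix.mul_assoc]
  rcases min_choice (Fintype.card m) (Fintype.card n) with h | h <;> rw [h]
  · exact sq_trace_le_card_mul_trace_mul_transpose _
  · rw [← h_trace, ← h_frob]
    exact sq_trace_le_card_mul_trace_mul_transpose _

end Matrix

theorem sq_sum_dotProduct_self_le {ι κ : Type*} [Fintype ι] [Fintype κ] (x : κ → ι → ℝ) :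
    (∑ r, x r ⬝ᵥ x r) ^ 2 ≤
      (min (Fintype.card κ) (Fintype.card ι) : ℕ) * ∑ r, ∑ s, (x r ⬝ᵥ x s) ^ 2 := by
  have h := sq_trace_mul_transpose_le_min_card (Matrix.of x)
  rw [trace_mul_transpose_eq_sum_sq (of x * (of x)ᵀ)] at h
  exact h

section Clifford

variable {ι n : Type*} [Fintype ι] {E : ι → Matrix n n ℝ}

theorem transpose_sum_smul_of_skew (hskew : ∀ i, (E i)ᵀ = -E i) (a : ι → ℝ) :
    (∑ i, a i • E i)ᵀ = -∑ i, a i • E i := by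
  simp [transpose_sum, hskew]

theorem sum_smul_anticomm [DecidableEq ι] [Fintype n] [DecidableEq n]
    (hcliff : ∀ i j, E i * E j + E j * E i = (if i = j then -2 else 0 : ℝ) • (1 : Matrix n n ℝ))
    (a b : ι → ℝ) :
    (∑ i, a i • E i) * (∑ i, b i • E i) + (∑ i, b i • E i) * (∑ i, a i • E i) =
      (-2 * (a ⬝ᵥ b)) • 1 := by
  have hpair : ∀ i j, (a i * b j) • (E i * E j) + (b j * a i) • (E j * E i) =
      (a i * b j * if i = j then -2 else 0) • (1 : Matrix n n ℝ) := by
    intro i j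
    rw [mul_comm (b j), ← smul_add, hcliff, smul_smul]
  rw [Finset.sum_mul_sum, Finset.sum_mul_sum,
    Finset.sum_comm (f := fun i j => b i • E i * (a j • E j)), ← Finset.sum_add_distrib]
  simp_rw [← Finset.sum_add_distrib, smul_mul_smul_comm, hpair]
  simp only [mul_ite, mul_zero, ite_smul, zero_smul, Finset.sum_ite_eq, Finset.mem_univ, if_true]
  rw [← Finset.sum_smul, dotProduct, ← Finset.sum_mul, mul_comm]

theorem sum_smul_mul_self [DecidableEq ι] [Fintype n] [DecidableEq n]
    (hcliff : ∀ i j, E i * E j + E j * E i = (if i = j then -2 else 0 : ℝ) • (1 : Matrix n n ℝ))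
    (a : ι → ℝ) :
    (∑ i, a i • E i) * (∑ i, a i • E i) = (-(a ⬝ᵥ a)) • 1 := by
  have h := sum_smul_anticomm hcliff a a
  rw [← two_smul ℝ, show -2 * (a ⬝ᵥ a) = 2 * -(a ⬝ᵥ a) by ring, ← smul_smul] at h
  exact smul_right_injective _ two_ne_zero h

theorem trace_sum_smul_mul_transpose [DecidableEq ι] [Fintype n] [DecidableEq n]
    (hskew : ∀ i, (E i)ᵀ = -E i)
    (hcliff : ∀ i j, E i * E j + E j * E i = (if i = j then -2 else 0 : ℝ) • (1 : Matrix n n ℝ))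
    (a : ι → ℝ) :
    trace ((∑ i, a i • E i) * (∑ i, a i • E i)ᵀ) = (a ⬝ᵥ a) * Fintype.card n := by
  rw [transpose_sum_smul_of_skew hskew, mul_neg, sum_smul_mul_self hcliff, trace_neg, trace_smul,
    trace_one, smul_eq_mul, neg_mul, neg_neg]

theorem trace_commutator_mul_transpose [DecidableEq ι] [Fintype n] [DecidableEq n]
    (hskew : ∀ i, (E i)ᵀ = -E i)
    (hcliff : ∀ i j, E i * E j + E j * E i = (if i = j then -2 else 0 : ℝ) • (1 : Matrix n n ℝ))
    (a b : ι → ℝ) :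
    let A := ∑ i, a i • E i
    let B := ∑ i, b i • E i
    trace ((A * B - B * A) * (A * B - B * A)ᵀ) =
      4 * ((a ⬝ᵥ a) * (b ⬝ᵥ b) - (a ⬝ᵥ b) ^ 2) * Fintype.card n := by
  intro A B
  have h_skew : (A * B - B * A)ᵀ = -(A * B - B * A) := by
    rw [transpose_sub, transpose_mul, transpose_mul, transpose_sum_smul_of_skew hskew,
      transpose_sum_smul_of_skew hskew]
    noncomm_ring
  rw [h_skew, mul_neg, commutator_mul_self_of_anticomm (sum_smul_mul_self hcliff a)
    (sum_smul_mul_self hcliff b) (sum_smul_anticomm hcliff a b), trace_neg, trace_smul, trace_one,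
    smul_eq_mul]
  ring

end Clifford

theorem ddvv_clifford_algebra_general (l m M : ℕ)
    (E : Fin (m - 1) → Matrix (Fin l) (Fin l) ℝ)
    (hskew : ∀ i, (E i)ᵀ = -(E i))
    (hcliff : ∀ i j, E i * E j + E j * E i =
      ((if i = j then -2 else 0 : ℝ)) • (1 : Matrix (Fin l) (Fin l) ℝ))
    (B : Fin M → Matrix (Fin l) (Fin l) ℝ)
    (hB : ∀ r, B r ∈ Submodule.span ℝ (Set.range E)) :
    ∑ r, ∑ s, trace ((B r * B s - B s * B r) * (B r * B s - B s * B r)ᵀ) ≤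
      (4 / (l : ℝ)) * (1 - 1 / ((min (m - 1) M : ℕ) : ℝ)) *
        (∑ r, trace (B r * (B r)ᵀ)) ^ 2 := by
  choose x hx using fun r => (Submodule.mem_span_range_iff_exists_fun ℝ).mp (hB r)
  obtain rfl : B = fun r => ∑ i, x r i • E i := funext fun r => (hx r).symm
  simp only [trace_commutator_mul_transpose hskew hcliff, trace_sum_smul_mul_transpose hskew hcliff,
    Fintype.card_fin]
  have h_gram := sq_sum_dotProduct_self_le x
  rw [Fintype.card_fin, Fintype.card_fin, min_comm] at h_gram
  set N : ℝ := ((min (m - 1) M : ℕ) : ℝ)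
  set P := ∑ r, x r ⬝ᵥ x r
  set D := ∑ r, ∑ s, (x r ⬝ᵥ x s) ^ 2
  have h_lhs : ∑ r, ∑ s, 4 * ((x r ⬝ᵥ x r) * (x s ⬝ᵥ x s) - (x r ⬝ᵥ x s) ^ 2) * (l : ℝ) =
      4 * (P ^ 2 - D) * l := by
    rw [sq P, Finset.sum_mul_sum, ← Finset.sum_sub_distrib, Finset.mul_sum, Finset.sum_mul]
    simp_rw [← Finset.sum_sub_distrib, Finset.mul_sum, Finset.sum_mul]
  have h_rhs : ∑ r, (x r ⬝ᵥ x r) * (l : ℝ) = P * l := (Finset.sum_mul ..).symm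
  have h_key : P ^ 2 / N ≤ D :=
    div_le_of_le_mul₀ (Nat.cast_nonneg _) (by positivity) (by linarith)
  rw [h_lhs, h_rhs]
  rcases eq_or_ne (l : ℝ) 0 with hl | hl
  · simp [hl] -- both sides vanish, the right one through `4 / 0 = 0`
  calc 4 * (P ^ 2 - D) * l ≤ 4 * (P ^ 2 - P ^ 2 / N) * l := by gcongr
    _ = (4 / l) * (1 - 1 / N) * (P * l) ^ 2 := by field_simp

/-- DDVV-type inequality for matrices in the span of a Clifford algebra representation. -/
theorem ddvv_clifford_algebra (l m M : ℕ) (hl : 0 < l)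
    (E : Fin (m - 1) → Matrix (Fin l) (Fin l) ℝ)
    (hskew : ∀ i, (E i)ᵀ = -(E i))
    (horth : ∀ i, E i * (E i)ᵀ = 1)
    (hcliff : ∀ i j, E i * E j + E j * E i =
      ((if i = j then -2 else 0 : ℝ)) • (1 : Matrix (Fin l) (Fin l) ℝ))
    (B : Fin M → Matrix (Fin l) (Fin l) ℝ)
    (hB : ∀ r, B r ∈ Submodule.span ℝ (Set.range E)) :
    ∑ r, ∑ s, trace ((B r * B s - B s * B r) * (B r * B s - B s * B r)ᵀ) ≤
      (4 / (l : ℝ)) * (1 - 1 / ((min (m - 1) M : ℕ) : ℝ)) *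
        (∑ r, trace (B r * (B r)ᵀ)) ^ 2 :=
  ddvv_clifford_algebra_general l m M E hskew hcliff B hB
end

section
/- Let A be an n×n real diagonal matrix with Frobenius norm 1, and let A₂,…,A_m be real symmetric n×n matrices with tr(A_α A_β) = 0 for α ≠ β and ‖A₂‖ ≥ ‖A₃‖ ≥ … ≥ ‖A_m‖. Then ∑_{α=2}^m ‖[A,A_α]‖² ≤ ∑_{α=2}^m ‖A_α‖² + ‖A₂‖². -/
/-!
Write `A = diagonal a`, so `∑ aᵢ² = 1` and `‖[A, B]‖² = ∑ᵢⱼ (aᵢ - aⱼ)² Bᵢⱼ²`. Bounding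
`(aᵢ - aⱼ)² ≤ 1 + eᵢⱼ` with `eᵢⱼ = max 0 ((aᵢ - aⱼ)² - 1)` leaves the error term
`∑ᵢⱼ eᵢⱼ ∑_α (B_α)ᵢⱼ²`, which is at most `‖B₁‖²` (the largest norm) for two reasons.

* For `i ≠ j`, Bessel's inequality for the orthogonal family `B_α` (norms `≤ ‖B₁‖²`) tested
  against `Eᵢⱼ + Eⱼᵢ`, of norm² `2` and inner product `2 (B_α)ᵢⱼ` with the symmetric `B_α`,
  gives `∑_α (B_α)ᵢⱼ² ≤ ‖B₁‖² / 2`.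
* `∑ᵢⱼ eᵢⱼ ≤ 2`: the pairs with `(aᵢ - aⱼ)² > 1` pairwise intersect and contain no triangle,
  since otherwise `∑ aᵢ² > 1`; so they all pass through one index `c`, and the row sum
  `∑ⱼ e_cj` is at most `1` by Cauchy-Schwarz.
-/

open Matrix

theorem exists_forall_eq_or_eq_of_pairwise_intersecting {α : Type*} {r : α → α → Prop}
    (hsymm : ∀ ⦃i j⦄, r i j → r j i)
    (hinter : ∀ ⦃i j k l⦄, r i j → r k l → i = k ∨ i = l ∨ j = k ∨ j = l)
    (htri : ∀ ⦃i j k⦄, r i j → r j k → ¬ r i k) (hne : ∃ i j, r i j) :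
    ∃ c, ∀ ⦃i j⦄, r i j → i = c ∨ j = c := by
  obtain ⟨p, q, hpq⟩ := hne
  by_cases hp : ∀ ⦃i j⦄, r i j → i = p ∨ j = p
  · exact ⟨p, hp⟩
  push Not at hp
  obtain ⟨i, j, hij, hip, hjp⟩ := hp
  obtain ⟨s, hqs, hsp⟩ : ∃ s, r q s ∧ s ≠ p := by
    rcases hinter hpq hij with h | h | rfl | rfl
    · exact absurd h.symm hip
    · exact absurd h.symm hjp
    · exact ⟨j, hij, hjp⟩
    · exact ⟨i, hsymm hij, hip⟩
  -- An edge `k l` avoiding `q` must meet both `p q` and `q s`, so it is `p s`: a triangle.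
  refine ⟨q, fun k l hkl => ?_⟩
  by_contra! hc
  have hp : p = k ∨ p = l := by
    rcases hinter hpq hkl with h | h | h | h
    exacts [.inl h, .inr h, absurd h.symm hc.1, absurd h.symm hc.2]
  have hs : s = k ∨ s = l := by
    rcases hinter hqs hkl with h | h | h | h
    exacts [absurd h.symm hc.1, absurd h.symm hc.2, .inl h, .inr h]
  rcases hp with rfl | rfl <;> rcases hs with rfl | rfl
  · exact hsp rfl
  · exact htri hpq hqs hkl
  · exact htri hpq hqs (hsymm hkl)
  · exact hsp rfl

section Scalar

variable {κ : Type*} {a : κ → ℝ}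

theorem ne_of_one_lt_sq_sub {i j : κ} (h : 1 < (a i - a j) ^ 2) : i ≠ j := by
  rintro rfl
  norm_num at h

theorem eq_or_eq_or_eq_or_eq_of_one_lt_sq_sub [Fintype κ] (ha : ∑ t, a t ^ 2 ≤ 1) {i j k l : κ}
    (hij : 1 < (a i - a j) ^ 2) (hkl : 1 < (a k - a l) ^ 2) :
    i = k ∨ i = l ∨ j = k ∨ j = l := by
  classical
  by_contra! h
  have hsum : ∑ t ∈ {i, j, k, l}, a t ^ 2 ≤ 1 :=
    (Finset.sum_le_univ_sum_of_nonneg fun _ => sq_nonneg _).trans ha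
  rw [Finset.sum_insert (by simp [ne_of_one_lt_sq_sub hij, h.1, h.2.1]),
    Finset.sum_insert (by simp [h.2.2.1, h.2.2.2]),
    Finset.sum_pair (ne_of_one_lt_sq_sub hkl)] at hsum
  nlinarith [sq_nonneg (a i + a j), sq_nonneg (a k + a l)]

theorem not_one_lt_sq_sub_of_triangle [Fintype κ] (ha : ∑ t, a t ^ 2 ≤ 1) {i j k : κ}
    (hij : 1 < (a i - a j) ^ 2) (hjk : 1 < (a j - a k) ^ 2) : ¬ 1 < (a i - a k) ^ 2 := by
  classical
  intro hik
  have hsum : ∑ t ∈ {i, j, k}, a t ^ 2 ≤ 1 :=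
    (Finset.sum_le_univ_sum_of_nonneg fun _ => sq_nonneg _).trans ha
  rw [Finset.sum_insert (by simp [ne_of_one_lt_sq_sub hij, ne_of_one_lt_sq_sub hik]),
    Finset.sum_pair (ne_of_one_lt_sq_sub hjk)] at hsum
  nlinarith [sq_nonneg (a i + a j + a k)]

def gapExcess (a : κ → ℝ) (i j : κ) : ℝ := max 0 ((a i - a j) ^ 2 - 1)

theorem gapExcess_nonneg (i j : κ) : 0 ≤ gapExcess a i j := le_max_left _ _

theorem gapExcess_comm (i j : κ) : gapExcess a i j = gapExcess a j i := by
  rw [gapExcess, gapExcess, sub_sq_comm]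

theorem sum_gapExcess_le_one [Fintype κ] (ha : ∑ t, a t ^ 2 ≤ 1) (c : κ) :
    ∑ j, gapExcess a c j ≤ 1 := by
  classical
  set J := Finset.univ.filter fun j => 1 < (a c - a j) ^ 2
  have hcJ : c ∉ J := by simp [J]
  have hsum : ∑ j, gapExcess a c j = ∑ j ∈ J, ((a c - a j) ^ 2 - 1) := by
    rw [Finset.sum_filter]
    refine Finset.sum_congr rfl fun j _ => ?_
    unfold gapExcess
    split_ifs with h
    · exact max_eq_right (by linarith)
    · exact max_eq_left (by linarith)
  have hnorm : a c ^ 2 + ∑ j ∈ J, a j ^ 2 ≤ 1 := by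
    rw [← Finset.sum_insert (f := fun j => a j ^ 2) hcJ]
    exact (Finset.sum_le_univ_sum_of_nonneg fun _ => sq_nonneg _).trans ha
  have hcs := sq_sum_le_card_mul_sum_sq (s := J) (f := a)
  have hexpand : ∑ j ∈ J, ((a c - a j) ^ 2 - 1)
      = J.card * (a c ^ 2 - 1) - 2 * a c * ∑ j ∈ J, a j + ∑ j ∈ J, a j ^ 2 := by
    simp only [sub_sq, Finset.sum_sub_distrib, Finset.sum_add_distrib, Finset.sum_const,
      nsmul_eq_mul, Finset.mul_sum]
    ring
  rw [hsum, hexpand]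
  -- With `T, V` the sums of `a j`, `a j ^ 2` over `J`: `-2 (a c) T ≤ (a c)² + T² ≤ (a c)² + |J| V`
  -- by Cauchy-Schwarz, so the total is at most `(|J| + 1) ((a c)² + V) - |J| ≤ 1`.
  nlinarith [sq_nonneg (a c + ∑ j ∈ J, a j), Nat.cast_nonneg (α := ℝ) J.card]

theorem sum_sum_gapExcess_le_two [Fintype κ] (ha : ∑ t, a t ^ 2 ≤ 1) :
    ∑ i, ∑ j, gapExcess a i j ≤ 2 := by
  classical
  by_cases hne : ∃ i j, 1 < (a i - a j) ^ 2
  swap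
  · push Not at hne
    calc ∑ i, ∑ j, gapExcess a i j = 0 :=
          Finset.sum_eq_zero fun i _ => Finset.sum_eq_zero fun j _ =>
            max_eq_left (by linarith [hne i j])
      _ ≤ 2 := by norm_num
  obtain ⟨c, hc⟩ := exists_forall_eq_or_eq_of_pairwise_intersecting
    (r := fun i j => 1 < (a i - a j) ^ 2) (fun i j h => by rwa [sub_sq_comm])
    (fun _ _ _ _ => eq_or_eq_or_eq_or_eq_of_one_lt_sq_sub ha)
    (fun _ _ _ => not_one_lt_sq_sub_of_triangle ha) hne
  have hpt : ∀ i j, gapExcess a i j ≤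
      (if i = c then gapExcess a c j else 0) + (if j = c then gapExcess a c i else 0) := by
    intro i j
    by_cases hi : i = c
    · subst hi
      rw [if_pos rfl]
      split_ifs <;> simp [gapExcess_nonneg]
    by_cases hj : j = c
    · subst hj
      simp [hi, gapExcess_comm i]
    have : ¬ 1 < (a i - a j) ^ 2 := fun h => (hc h).elim hi hj
    rw [if_neg hi, if_neg hj, add_zero]
    exact max_le le_rfl (by linarith)
  calc ∑ i, ∑ j, gapExcess a i j
      ≤ ∑ i, ∑ j,
          ((if i = c then gapExcess a c j else 0) + (if j = c then gapExcess a c i else 0)) :=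
        Finset.sum_le_sum fun i _ => Finset.sum_le_sum fun j _ => hpt i j
    _ = ∑ j, gapExcess a c j + ∑ i, gapExcess a c i := by
        simp [Finset.sum_add_distrib]
    _ ≤ 2 := by linarith [sum_gapExcess_le_one ha c]

end Scalar

section Bessel

variable {E ι : Type*} [NormedAddCommGroup E] [InnerProductSpace ℝ E] [Fintype ι]

open RealInnerProductSpace in
theorem norm_sum_smul_sq_of_orthogonal {v : ι → E} (hv : Pairwise fun α β => ⟪v α, v β⟫ = 0)
    (t : ι → ℝ) : ‖∑ α, t α • v α‖ ^ 2 = ∑ α, t α ^ 2 * ‖v α‖ ^ 2 := by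
  classical
  rw [← real_inner_self_eq_norm_sq, sum_inner]
  refine Finset.sum_congr rfl fun α _ => ?_
  rw [inner_sum, Finset.sum_eq_single α (fun β _ hβ => by simp [inner_smul_left,
    inner_smul_right, hv hβ.symm]) (by simp)]
  simp only [inner_smul_left, inner_smul_right, real_inner_self_eq_norm_sq, conj_trivial]
  ring

open RealInnerProductSpace in
theorem sum_inner_sq_le_of_orthogonal {v : ι → E} (hv : Pairwise fun α β => ⟪v α, v β⟫ = 0)
    {c : ℝ} (hc₀ : 0 ≤ c) (hc : ∀ α, ‖v α‖ ^ 2 ≤ c) (x : E) :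
    ∑ α, ⟪x, v α⟫ ^ 2 ≤ c * ‖x‖ ^ 2 := by
  set S := ∑ α, ⟪x, v α⟫ ^ 2
  set y := ∑ α, ⟪x, v α⟫ • v α
  have hxy : ⟪x, y⟫ = S := by
    simp only [y, S, inner_sum, inner_smul_right, sq]
  have hy : ‖y‖ ^ 2 ≤ c * S := by
    rw [norm_sum_smul_sq_of_orthogonal hv, Finset.mul_sum]
    exact Finset.sum_le_sum fun α _ => by nlinarith [hc α, sq_nonneg ⟪x, v α⟫]
  have hcs := real_inner_mul_inner_self_le x y
  rw [hxy, real_inner_self_eq_norm_sq, real_inner_self_eq_norm_sq] at hcs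
  have hS : 0 ≤ S := Finset.sum_nonneg fun _ _ => sq_nonneg _
  rcases hS.eq_or_lt with h | h
  · rw [← h]; positivity
  · -- `S² = ⟪x, y⟫² ≤ ‖x‖² ‖y‖² ≤ ‖x‖² c S`
    nlinarith [sq_nonneg ‖x‖]

end Bessel

section Frobenius

variable {m n : Type*} [Fintype m] [Fintype n]

def frobeniusVec (M : Matrix m n ℝ) : EuclideanSpace ℝ (m × n) :=
  WithLp.toLp 2 fun p => M p.1 p.2

theorem inner_frobeniusVec (M N : Matrix m n ℝ) :
    inner ℝ (frobeniusVec M) (frobeniusVec N) = trace (M * Nᵀ) := by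
  simp [frobeniusVec, PiLp.inner_apply, ← sum_hadamard_eq, Fintype.sum_prod_type, mul_comm]

theorem norm_frobeniusVec_sq (M : Matrix m n ℝ) : ‖frobeniusVec M‖ ^ 2 = trace (M * Mᵀ) := by
  rw [← real_inner_self_eq_norm_sq, inner_frobeniusVec]

theorem trace_mul_transpose_self (M : Matrix m n ℝ) : trace (M * Mᵀ) = ∑ i, ∑ j, M i j ^ 2 := by
  simp [← sum_hadamard_eq, sq]

end Frobenius

section Commutator

variable {n ι : Type*} [Fintype n] [DecidableEq n] [Fintype ι]

theorem trace_commutator_diagonal_mul_transpose (a : n → ℝ) (B : Matrix n n ℝ) :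
    trace ((diagonal a * B - B * diagonal a) * (diagonal a * B - B * diagonal a)ᵀ)
      = ∑ i, ∑ j, (a i - a j) ^ 2 * B i j ^ 2 := by
  simp only [trace_mul_transpose_self, Matrix.sub_apply, diagonal_mul, mul_diagonal]
  congr! 2 with i _ j _
  ring

open RealInnerProductSpace in
theorem sum_sq_apply_le_half_of_orthogonal {B : ι → Matrix n n ℝ} (hsym : ∀ α, (B α)ᵀ = B α)
    (horth : Pairwise fun α β => trace (B α * (B β)ᵀ) = 0) {c : ℝ} (hc₀ : 0 ≤ c)
    (hc : ∀ α, trace (B α * (B α)ᵀ) ≤ c) {i j : n} (hij : i ≠ j) :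
    ∑ α, B α i j ^ 2 ≤ c / 2 := by
  set x := EuclideanSpace.single (i, j) (1 : ℝ) + EuclideanSpace.single (j, i) 1
  have hx : ‖x‖ ^ 2 = 2 := by
    rw [norm_add_sq_real]
    simp [EuclideanSpace.inner_single_left, hij]
    norm_num
  have hxB : ∀ α, ⟪x, frobeniusVec (B α)⟫ = 2 * B α i j := fun α => by
    have : B α j i = B α i j := by rw [← transpose_apply (B α), hsym]
    simp [x, inner_add_left, EuclideanSpace.inner_single_left, frobeniusVec, this]
    ring
  have := sum_inner_sq_le_of_orthogonal (v := fun α => frobeniusVec (B α))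
    (fun α β h => (inner_frobeniusVec _ _).trans (horth h)) hc₀
    (fun α => by rw [norm_frobeniusVec_sq]; exact hc α) x
  simp only [hxB, hx, mul_pow, ← Finset.mul_sum] at this
  linarith

theorem sum_trace_commutator_le (a : n → ℝ) (B : ι → Matrix n n ℝ) :
    ∑ α, trace ((diagonal a * B α - B α * diagonal a) * (diagonal a * B α - B α * diagonal a)ᵀ)
      ≤ ∑ α, trace (B α * (B α)ᵀ) + ∑ i, ∑ j, gapExcess a i j * ∑ α, B α i j ^ 2 := by
  calc _ ≤ ∑ α, ∑ i, ∑ j, (1 + gapExcess a i j) * B α i j ^ 2 := by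
        simp only [trace_commutator_diagonal_mul_transpose]
        gcongr with α _ i _ j _
        exact sub_le_iff_le_add'.mp (le_max_right _ _)
    _ = _ := by
        simp only [add_mul, one_mul, Finset.sum_add_distrib, trace_mul_transpose_self,
          Finset.mul_sum]
        rw [Finset.sum_comm]
        simp only [Finset.sum_comm (γ := ι)]

theorem sum_gapExcess_mul_le {a : n → ℝ} (ha : ∑ t, a t ^ 2 ≤ 1) {B : ι → Matrix n n ℝ}
    (hsym : ∀ α, (B α)ᵀ = B α) (horth : Pairwise fun α β => trace (B α * (B β)ᵀ) = 0)
    {c : ℝ} (hc₀ : 0 ≤ c) (hc : ∀ α, trace (B α * (B α)ᵀ) ≤ c) :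
    ∑ i, ∑ j, gapExcess a i j * ∑ α, B α i j ^ 2 ≤ c := by
  have hpt : ∀ i j, gapExcess a i j * ∑ α, B α i j ^ 2 ≤ gapExcess a i j * (c / 2) := by
    intro i j
    rcases eq_or_ne i j with rfl | hij
    · simp [gapExcess]
    · exact mul_le_mul_of_nonneg_left (sum_sq_apply_le_half_of_orthogonal hsym horth hc₀ hc hij)
        (gapExcess_nonneg i j)
  calc ∑ i, ∑ j, gapExcess a i j * ∑ α, B α i j ^ 2
      ≤ ∑ i, ∑ j, gapExcess a i j * (c / 2) :=
        Finset.sum_le_sum fun i _ => Finset.sum_le_sum fun j _ => hpt i j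
    _ = (∑ i, ∑ j, gapExcess a i j) * (c / 2) := by simp only [Finset.sum_mul]
    _ ≤ 2 * (c / 2) := by gcongr; exact sum_sum_gapExcess_le_two ha
    _ = c := by ring

end Commutator

/-- `B α` plays the role of `A_{α+2}` in the informal statement. -/
theorem lu_inequality (n m : ℕ) (hm : 0 < m)
    (A : Matrix (Fin n) (Fin n) ℝ) (hdiag : A.IsDiag)
    (hA : trace (A * Aᵀ) = 1)
    (B : Fin m → Matrix (Fin n) (Fin n) ℝ)
    (hsym : ∀ α, (B α)ᵀ = B α)
    (horth : ∀ α β, α ≠ β → trace (B α * (B β)ᵀ) = 0)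
    (hmono : ∀ α β : Fin m, α ≤ β → trace (B β * (B β)ᵀ) ≤ trace (B α * (B α)ᵀ)) :
    ∑ α, trace ((A * B α - B α * A) * (A * B α - B α * A)ᵀ) ≤
      ∑ α, trace (B α * (B α)ᵀ) + trace (B ⟨0, hm⟩ * (B ⟨0, hm⟩)ᵀ) := by
  rw [← hdiag.diagonal_diag] at hA ⊢
  have ha : ∑ i, A.diag i ^ 2 ≤ 1 := by
    simpa [diagonal_mul_diagonal, trace_diagonal, sq] using hA.le
  have hc₀ : 0 ≤ trace (B ⟨0, hm⟩ * (B ⟨0, hm⟩)ᵀ) := by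
    rw [← norm_frobeniusVec_sq]; positivity
  exact (sum_trace_commutator_le _ B).trans <| add_le_add le_rfl <| sum_gapExcess_mul_le ha hsym
    (fun α β => horth α β) hc₀ fun α => hmono _ _ (Nat.zero_le _)
end

section
/- For any complex n×n matrix X with ‖X‖ = 1, each positive eigenvalue of the operator T_X(Y) = [X*,[X,Y]] occurs with even multiplicity: if the eigenvalues are listed in decreasing order λ₁ ≥ λ₂ ≥ …, then λ_{2i-1}(T_X) = λ_{2i}(T_X) whenever λ_{2i-1}(T_X) > 0. -/
open Matrix

/-- The operator `T_X (Y) = [X*, [X, Y]]`. -/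
noncomputable def TX {n : ℕ} (X Y : Matrix (Fin n) (Fin n) ℂ) : Matrix (Fin n) (Fin n) ℂ :=
  Xᴴ * (X * Y - Y * X) - (X * Y - Y * X) * Xᴴ

/-!
Fix a real `λ ≠ 0`. On the `λ`-eigenspace `E` of `T_X` consider the alternating form
`ω(Y, Z) = tr([X, Y] Z)`. It is nondegenerate on `E`: for `Y ∈ E` the matrix `Z = [X, Y]*` lies in
`E` again, and `ω(Y, Z) = ‖[X, Y]‖²` vanishes only if `T_X Y = 0`, i.e. `Y = 0`. A skew-symmetric
matrix of odd size has zero determinant, so `dim E` is even.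

With the eigenvalues in decreasing order, `μ₂ᵢ > μ₂ᵢ₊₁` and `μ₂ᵢ > 0` would make
`{j | μⱼ ≥ μ₂ᵢ} = {0, …, 2i}` of odd size, although it is a union of eigenvalue level sets of
positive eigenvalues, each of even size.
-/

open Module Finset

theorem LinearMap.BilinForm.even_finrank_of_isAlt {K M : Type*} [Field K] [NeZero (2 : K)]
    [AddCommGroup M] [Module K M] [FiniteDimensional K M] {B : LinearMap.BilinForm K M}
    (hB : B.IsAlt) (hnd : B.Nondegenerate) : Even (finrank K M) := by
  let b := finBasis K M
  set A := BilinForm.toMatrix b B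
  have hskew : Aᵀ = -A := by
    ext i j
    simpa [A, BilinForm.toMatrix_apply] using (LinearMap.IsAlt.neg hB (b i) (b j)).symm
  by_contra hodd
  rw [Nat.not_even_iff_odd] at hodd
  have hdet : A.det = -A.det := by
    conv_lhs => rw [← det_transpose, hskew, det_neg, Fintype.card_fin, hodd.neg_one_pow]
    ring
  refine (nondegenerate_iff_det_ne_zero b).mp hnd ?_
  have h2 : (2 : K) * A.det = 0 := by linear_combination hdet
  exact (mul_eq_zero.mp h2).resolve_left two_ne_zero

theorem Module.Basis.finrank_eigenspace_eq_card {ι K M : Type*} [Fintype ι]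
    [Field K] [DecidableEq K] [AddCommGroup M] [Module K M] (b : Basis ι K M)
    {T : Module.End K M} {μ : ι → K} (hT : ∀ i, T (b i) = μ i • b i) (c : K) :
    finrank K (T.eigenspace c) = #{i | μ i = c} := by
  classical
  have hdiag : LinearMap.toMatrix b b T = diagonal μ := by
    ext i j
    rcases eq_or_ne i j with rfl | hij <;> simp [LinearMap.toMatrix_apply, *]
  have hspan : T.eigenspace c = Submodule.span K (b '' {i | μ i = c}) := by
    apply le_antisymm
    · intro x hx
      rw [b.mem_span_image]
      intro i hi
      have h := congrFun (LinearMap.toMatrix_mulVec_repr b b T x) i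
      rw [hdiag, Module.End.mem_eigenspace_iff.mp hx] at h
      simp only [mulVec_diagonal, map_smul, Finsupp.smul_apply, smul_eq_mul] at h
      exact mul_right_cancel₀ (Finsupp.mem_support_iff.mp hi) h
    · rw [Submodule.span_le]
      rintro _ ⟨i, hi, rfl⟩
      simp [hT, hi.out]
  rw [hspan, Set.image_eq_range, finrank_span_eq_card (b := fun i : {i | μ i = c} => b i)
    (b.linearIndependent.comp _ Subtype.val_injective)]
  simp

theorem linearIndependent_of_trace_mul_conjTranspose {ι R m : Type*} [Fintype ι] [DecidableEq ι]
    [CommRing R] [StarRing R] [Fintype m] {V : ι → Matrix m m R}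
    (horth : ∀ i j, trace (V i * (V j)ᴴ) = if i = j then 1 else 0) :
    LinearIndependent R V := by
  rw [Fintype.linearIndependent_iff]
  intro g hg i
  simpa [Finset.sum_mul, trace_sum, horth] using congrArg (fun W => trace (W * (V i)ᴴ)) hg

section CommutatorTraceForm

variable {R m : Type*} [CommRing R] [Fintype m]

def commutatorTraceForm (X : Matrix m m R) : LinearMap.BilinForm R (Matrix m m R) :=
  LinearMap.mk₂ R (fun Y Z => trace ((X * Y - Y * X) * Z))
    (fun Y Y' Z => by simp only [mul_add, add_mul, sub_mul, trace_add, trace_sub]; ring)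
    (fun c Y Z => by simp only [mul_smul_comm, smul_mul_assoc, ← smul_sub, trace_smul])
    (fun Y Z Z' => by simp only [mul_add, trace_add])
    (fun c Y Z => by simp only [mul_smul_comm, trace_smul])

@[simp]
theorem commutatorTraceForm_apply (X Y Z : Matrix m m R) :
    commutatorTraceForm X Y Z = trace ((X * Y - Y * X) * Z) := rfl

theorem commutatorTraceForm_isAlt (X : Matrix m m R) : (commutatorTraceForm X).IsAlt := by
  intro Y
  rw [commutatorTraceForm_apply, sub_mul, trace_sub, trace_mul_cycle X, sub_self]

end CommutatorTraceForm

section TX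

variable {n : ℕ}

noncomputable def TXLin (X : Matrix (Fin n) (Fin n) ℂ) :
    Module.End ℂ (Matrix (Fin n) (Fin n) ℂ) :=
  (LinearMap.mulLeft ℂ Xᴴ - LinearMap.mulRight ℂ Xᴴ) *
    (LinearMap.mulLeft ℂ X - LinearMap.mulRight ℂ X)

@[simp]
theorem TXLin_apply (X Y : Matrix (Fin n) (Fin n) ℂ) : TXLin X Y = TX X Y := by
  simp [TXLin, TX]

theorem TX_conjTranspose_commutator {X Y : Matrix (Fin n) (Fin n) ℂ} {lam : ℝ}
    (h : TX X Y = (lam : ℂ) • Y) :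
    TX X (X * Y - Y * X)ᴴ = (lam : ℂ) • (X * Y - Y * X)ᴴ := by
  have hcomm : X * (X * Y - Y * X)ᴴ - (X * Y - Y * X)ᴴ * X = -((lam : ℂ) • Yᴴ) := by
    have := congrArg conjTranspose h
    simp only [TX, conjTranspose_sub, conjTranspose_mul, conjTranspose_conjTranspose,
      conjTranspose_smul, Complex.star_def, Complex.conj_ofReal] at this ⊢
    rw [← this]
    abel
  rw [TX, hcomm]
  simp only [mul_neg, neg_mul, mul_smul_comm, smul_mul_assoc, conjTranspose_sub,
    conjTranspose_mul, smul_sub]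
  abel

open scoped ComplexOrder in
theorem commutatorTraceForm_restrict_eigenspace_nondegenerate (X : Matrix (Fin n) (Fin n) ℂ)
    {lam : ℝ} (hlam : lam ≠ 0) :
    ((commutatorTraceForm X).restrict ((TXLin X).eigenspace lam)).Nondegenerate := by
  have hAlt : ((commutatorTraceForm X).restrict ((TXLin X).eigenspace lam)).IsAlt :=
    fun Y => commutatorTraceForm_isAlt X Y
  refine hAlt.isRefl.nondegenerate_iff_separatingLeft.mpr ?_
  rintro ⟨Y, hY⟩ hsep
  have hY : TX X Y = (lam : ℂ) • Y := by simpa using Module.End.mem_eigenspace_iff.mp hY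
  have hmem : (X * Y - Y * X)ᴴ ∈ (TXLin X).eigenspace lam :=
    Module.End.mem_eigenspace_iff.mpr (by simpa using TX_conjTranspose_commutator hY)
  have hcomm : X * Y - Y * X = 0 :=
    trace_mul_conjTranspose_self_eq_zero_iff.mp (hsep ⟨_, hmem⟩)
  have : (lam : ℂ) • Y = 0 := by rw [← hY, TX, hcomm]; simp
  simpa [hlam] using this

theorem even_finrank_eigenspace_TXLin (X : Matrix (Fin n) (Fin n) ℂ) {lam : ℝ}
    (hlam : lam ≠ 0) : Even (finrank ℂ ((TXLin X).eigenspace lam)) :=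
  LinearMap.BilinForm.even_finrank_of_isAlt (fun Y => commutatorTraceForm_isAlt X Y)
    (commutatorTraceForm_restrict_eigenspace_nondegenerate X hlam)

end TX

theorem Antitone.apply_two_mul_eq_of_even_card_fiber {α : Type*} [LinearOrder α] {N : ℕ}
    {μ : Fin N → α} (hμ : Antitone μ) {a : α} (heven : ∀ c, a < c → Even #{j | μ j = c}) :
    ∀ (i : ℕ) (h : 2 * i + 1 < N),
      a < μ ⟨2 * i, by omega⟩ → μ ⟨2 * i, by omega⟩ = μ ⟨2 * i + 1, h⟩ := by
  intro i h ha
  set m : Fin N := ⟨2 * i, by omega⟩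
  set m' : Fin N := ⟨2 * i + 1, h⟩
  by_contra hne
  have hlt : μ m' < μ m := (hμ (show m ≤ m' from Nat.le_succ _)).lt_of_ne' hne
  have hupper : ({j | μ m ≤ μ j} : Finset (Fin N)) = Iic m := by
    ext j
    simp only [mem_filter, mem_univ, true_and, mem_Iic]
    refine ⟨fun hj => ?_, fun hj => hμ hj⟩
    by_contra hjm
    have hj' : m' ≤ j := Nat.succ_le_of_lt (not_le.mp hjm)
    exact ((hμ hj').trans_lt hlt).not_ge hj
  have hodd : Odd #({j | μ m ≤ μ j} : Finset (Fin N)) := by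
    simp [hupper, m]
  refine (Nat.not_even_iff_odd.mpr hodd) ?_
  rw [card_eq_sum_card_image μ]
  refine even_sum _ fun c hc => ?_
  obtain ⟨j, hj, rfl⟩ := mem_image.mp hc
  have hj : μ m ≤ μ j := (mem_filter.mp hj).2
  rw [filter_filter, filter_congr fun k _ => and_iff_right_of_imp fun hk => hk ▸ hj]
  exact heven _ (ha.trans_le hj)

/-- Every positive eigenvalue of `T_X` has even multiplicity: with eigenvalues `μ` listed in
decreasing order (via an orthonormal eigenbasis `V` of `M(n,ℂ)`), consecutive
even/odd-indexed eigenvalues agree whenever positive. -/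
theorem TX_even_multiplicity (n : ℕ)
    (X : Matrix (Fin n) (Fin n) ℂ)
    (μ : Fin (n * n) → ℝ) (hmono : Antitone μ)
    (V : Fin (n * n) → Matrix (Fin n) (Fin n) ℂ)
    (horth : ∀ i j, trace (V i * (V j)ᴴ) = if i = j then 1 else 0)
    (heig : ∀ i, TX X (V i) = (μ i : ℂ) • V i) :
    ∀ (i : ℕ) (h : 2 * i + 1 < n * n),
      0 < μ ⟨2 * i, by omega⟩ → μ ⟨2 * i, by omega⟩ = μ ⟨2 * i + 1, h⟩ := by
  have hcard : Fintype.card (Fin (n * n)) = finrank ℂ (Matrix (Fin n) (Fin n) ℂ) := by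
    simp [finrank_matrix]
  let b := basisOfLinearIndependentOfCardEqFinrank' V
    (linearIndependent_of_trace_mul_conjTranspose horth) hcard
  have hbeig : ∀ i, TXLin X (b i) = (μ i : ℂ) • b i := by simpa [b] using heig
  refine hmono.apply_two_mul_eq_of_even_card_fiber fun c hc => ?_
  have hfiber := b.finrank_eigenspace_eq_card hbeig c
  simp only [Complex.ofReal_inj] at hfiber
  exact hfiber ▸ even_finrank_eigenspace_TXLin X hc.ne'
end
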